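/- For every integer n ≥ 2 and every ω with 0 < ω < 1 − 2^{−n}, the strict inequality pSep(ω,n) < pEnt(ω,n) holds, i.e. (1/2 + √((1−ω)^{1/n})·√(1 − (1−ω)^{1/n}))^n < 2^{−n}·(√((2^n−1)·ω) + √(1−ω))². Moreover the two bounds coincide at ω = 0 and at ω = 1 − 2^{−n}, where both equal 2^{−n} and 1 respectively. -/

import Mathlib

/-!
Write `1 - ω = (a²)ⁿ` with `a² + b² = 1` and `0 < b < a`. Then `pSep = (a + b)^{2n} / 2ⁿ` and
`pEnt = (aⁿ + √((2ⁿ - 1)(1 - a^{2n})))² / 2ⁿ`. Expanding `(a + b)ⁿ` binomially, everything but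
`aⁿ` is `∑_{k ≥ 1} C(n,k) a^{n-k} bᵏ`, and Cauchy–Schwarz with the weights `C(n,k)`, which sum to
`2ⁿ - 1`, bounds it by `√((2ⁿ - 1)((a² + b²)ⁿ - a^{2n}))`. The bound is strict because the terms
`a^{n-k} bᵏ` are not all equal when `a ≠ b`.
-/

/-- Maximal success probability of entangled preparations:
`pEnt(ω,n) = 2^{−n}(√((2^n−1)ω) + √(1−ω))²`. -/
noncomputable def pEnt (ω : ℝ) (n : ℕ) : ℝ :=
  (1 / (2 : ℝ) ^ n) * (Real.sqrt (((2 : ℝ) ^ n - 1) * ω) + Real.sqrt (1 - ω)) ^ 2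

/-- Maximal success probability of fully separable preparations:
`pSep(ω,n) = (1/2 + √((1−ω)^{1/n})√(1−(1−ω)^{1/n}))^n`. -/
noncomputable def pSep (ω : ℝ) (n : ℕ) : ℝ :=
  (1 / 2 + Real.sqrt ((1 - ω) ^ ((n : ℝ)⁻¹)) *
    Real.sqrt (1 - (1 - ω) ^ ((n : ℝ)⁻¹))) ^ n

open Finset

theorem Finset.sum_sum_mul_mul_sub_sq {ι : Type*} (s : Finset ι) (w u : ι → ℝ) :
    ∑ k ∈ s, ∑ l ∈ s, w k * w l * (u k - u l) ^ 2 =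
      2 * ((∑ k ∈ s, w k) * ∑ k ∈ s, w k * u k ^ 2 - (∑ k ∈ s, w k * u k) ^ 2) := by
  calc _ = ∑ k ∈ s, ∑ l ∈ s, ((w k * u k ^ 2) * w l + w k * (w l * u l ^ 2)
          - 2 * ((w k * u k) * (w l * u l))) :=
        sum_congr rfl fun _ _ ↦ sum_congr rfl fun _ _ ↦ by ring
    _ = _ := by
      simp only [sum_add_distrib, sum_sub_distrib, ← mul_sum, ← sum_mul]
      ring

theorem Finset.sq_sum_mul_lt_sum_mul_sum_mul_sq {ι : Type*} {s : Finset ι} {w u : ι → ℝ}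
    (hw : ∀ k ∈ s, 0 < w k) {i j : ι} (hi : i ∈ s) (hj : j ∈ s) (hu : u i ≠ u j) :
    (∑ k ∈ s, w k * u k) ^ 2 < (∑ k ∈ s, w k) * ∑ k ∈ s, w k * u k ^ 2 := by
  have hterm : ∀ k ∈ s, ∀ l ∈ s, 0 ≤ w k * w l * (u k - u l) ^ 2 := fun k hk l hl ↦
    mul_nonneg (mul_pos (hw k hk) (hw l hl)).le (sq_nonneg _)
  have hpos : 0 < ∑ k ∈ s, ∑ l ∈ s, w k * w l * (u k - u l) ^ 2 :=
    calc 0 < w i * w j * (u i - u j) ^ 2 :=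
          mul_pos (mul_pos (hw i hi) (hw j hj)) (pow_two_pos_of_ne_zero (sub_ne_zero.2 hu))
      _ ≤ ∑ l ∈ s, w i * w l * (u i - u l) ^ 2 := single_le_sum (hterm i hi) hj
      _ ≤ _ := single_le_sum (f := fun k ↦ ∑ l ∈ s, w k * w l * (u k - u l) ^ 2)
          (fun k hk ↦ sum_nonneg (hterm k hk)) hi
  rw [sum_sum_mul_mul_sub_sq] at hpos
  linarith

theorem add_pow_eq_pow_add_sum {R : Type*} [CommSemiring R] (x y : R) (n : ℕ) :
    (x + y) ^ n =
      x ^ n + ∑ k ∈ range n, (n.choose (k + 1) : R) * (x ^ (n - (k + 1)) * y ^ (k + 1)) := by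
  rw [add_comm x, add_pow, sum_range_succ', add_comm]
  congr 1
  · simp
  · exact sum_congr rfl fun _ _ ↦ by ring

theorem add_pow_sub_pow_lt_sqrt {a b : ℝ} (ha : a ≠ 0) (hb : b ≠ 0) (hab : a ≠ b) {n : ℕ}
    (hn : 2 ≤ n) :
    (a + b) ^ n - a ^ n < √((2 ^ n - 1) * ((a ^ 2 + b ^ 2) ^ n - (a ^ 2) ^ n)) := by
  set w : ℕ → ℝ := fun k ↦ n.choose (k + 1)
  set u : ℕ → ℝ := fun k ↦ a ^ (n - (k + 1)) * b ^ (k + 1)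
  have hsum : (a + b) ^ n - a ^ n = ∑ k ∈ range n, w k * u k := by
    rw [add_pow_eq_pow_add_sum]
    ring
  have hsum_sq : (a ^ 2 + b ^ 2) ^ n - (a ^ 2) ^ n = ∑ k ∈ range n, w k * u k ^ 2 := by
    rw [add_pow_eq_pow_add_sum, add_sub_cancel_left]
    exact sum_congr rfl fun _ _ ↦ by simp only [w, u, mul_pow, ← pow_mul, mul_comm 2]
  have hsum_one : (2 : ℝ) ^ n - 1 = ∑ k ∈ range n, w k := by
    have := add_pow_eq_pow_add_sum (1 : ℝ) 1 n
    simp only [one_add_one_eq_two, one_pow, mul_one] at this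
    rw [this, add_sub_cancel_left]
  obtain ⟨m, rfl⟩ : ∃ m, n = m + 2 := ⟨n - 2, by omega⟩
  have hu : u 0 ≠ u 1 := by
    have : a ^ m * b ≠ 0 := by positivity
    simp only [u, show m + 2 - 1 = m + 1 by omega, show m + 2 - 2 = m by omega]
    intro h
    exact hab (mul_left_cancel₀ this (by linear_combination h))
  have hw : ∀ k ∈ range (m + 2), 0 < w k := fun k hk ↦
    Nat.cast_pos.2 (Nat.choose_pos (by simp at hk; omega))
  rw [hsum, hsum_sq, hsum_one]
  exact Real.lt_sqrt_of_sq_lt (sq_sum_mul_lt_sum_mul_sum_mul_sq hw (by simp) (by simp) hu)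

theorem pSep_one_sub_pow {a b : ℝ} (ha : 0 ≤ a) (hb : 0 ≤ b) (h_norm : a ^ 2 + b ^ 2 = 1)
    {n : ℕ} (hn : n ≠ 0) : pSep (1 - (a ^ 2) ^ n) n = ((a + b) ^ n) ^ 2 / 2 ^ n := by
  rw [pSep, sub_sub_cancel, Real.pow_rpow_inv_natCast (sq_nonneg a) hn, Real.sqrt_sq ha,
    show 1 - a ^ 2 = b ^ 2 by linarith, Real.sqrt_sq hb, ← pow_mul, mul_comm n, pow_mul,
    ← div_pow]
  congr 1
  linear_combination -h_norm / 2

theorem pEnt_one_sub_pow {a : ℝ} (ha : 0 ≤ a) (n : ℕ) :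
    pEnt (1 - (a ^ 2) ^ n) n = (a ^ n + √((2 ^ n - 1) * (1 - (a ^ 2) ^ n))) ^ 2 / 2 ^ n := by
  rw [pEnt, sub_sub_cancel, show (a ^ 2) ^ n = (a ^ n) ^ 2 by ring, Real.sqrt_sq (pow_nonneg ha n)]
  ring

theorem pSep_zero {n : ℕ} (hn : n ≠ 0) : pSep 0 n = 1 / 2 ^ n := by
  simpa using pSep_one_sub_pow zero_le_one le_rfl (by norm_num) hn

theorem pSep_one_sub_inv_two_pow {n : ℕ} (hn : n ≠ 0) : pSep (1 - 1 / 2 ^ n) n = 1 := by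
  set a := √(1 / 2 : ℝ)
  have ha : a ^ 2 = 1 / 2 := Real.sq_sqrt (by norm_num)
  have := pSep_one_sub_pow (Real.sqrt_nonneg _) (Real.sqrt_nonneg _)
    (show a ^ 2 + a ^ 2 = 1 by rw [ha]; norm_num) hn
  rw [ha, ← pow_mul, mul_comm, pow_mul, show (a + a) ^ 2 = 2 by linear_combination 4 * ha] at this
  simpa [div_pow] using this

theorem pEnt_one_sub_inv_two_pow (n : ℕ) : pEnt (1 - 1 / 2 ^ n) n = 1 := by
  rw [pEnt, sub_sub_cancel]
  set c : ℝ := 2 ^ n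
  have hc : 1 ≤ c := one_le_pow₀ one_le_two
  set s := √(1 / c)
  have hs : s ^ 2 = 1 / c := Real.sq_sqrt (by positivity)
  have hcs : c * s ^ 2 = 1 := by
    rw [hs]
    field_simp
  have hsqrt : √((c - 1) * (1 - 1 / c)) = (c - 1) * s := by
    rw [← hs, show (c - 1) * (1 - s ^ 2) = ((c - 1) * s) ^ 2 by linear_combination (1 - c) * hcs,
      Real.sqrt_sq (by positivity)]
  rw [hsqrt, show (c - 1) * s + s = c * s by ring, mul_pow, hs]
  field_simp

theorem pSep_lt_pEnt_one_sub_pow {a b : ℝ} (ha : 0 < a) (hb : 0 < b) (hab : a ≠ b)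
    (h_norm : a ^ 2 + b ^ 2 = 1) {n : ℕ} (hn : 2 ≤ n) :
    pSep (1 - (a ^ 2) ^ n) n < pEnt (1 - (a ^ 2) ^ n) n := by
  have hlt := add_pow_sub_pow_lt_sqrt ha.ne' hb.ne' hab hn
  rw [h_norm, one_pow] at hlt
  rw [pSep_one_sub_pow ha.le hb.le h_norm (by omega), pEnt_one_sub_pow ha.le]
  gcongr
  linarith

theorem exists_sq_add_sq_eq_one_of_lt_one_sub_inv_two_pow {ω : ℝ} {n : ℕ} (hn : n ≠ 0)
    (hω₀ : 0 < ω) (hω : ω < 1 - 1 / 2 ^ n) :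
    ∃ a b : ℝ, 0 < b ∧ b < a ∧ a ^ 2 + b ^ 2 = 1 ∧ ω = 1 - (a ^ 2) ^ n := by
  have h1ω : 0 < 1 - ω := by linarith [show (0 : ℝ) < 1 / 2 ^ n by positivity]
  set t := (1 - ω) ^ (n : ℝ)⁻¹
  have htn : t ^ n = 1 - ω := Real.rpow_inv_natCast_pow h1ω.le hn
  have ht₀ : 0 ≤ t := Real.rpow_nonneg h1ω.le _
  have ht₁ : t < 1 := Real.rpow_lt_one h1ω.le (by linarith) (by positivity)
  have ht_half : 1 / 2 < t :=
    lt_of_pow_lt_pow_left₀ n ht₀ (by rw [htn, div_pow, one_pow]; linarith)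
  refine ⟨√t, √(1 - t), Real.sqrt_pos.2 (by linarith),
    Real.sqrt_lt_sqrt (by linarith) (by linarith), ?_, ?_⟩
  · rw [Real.sq_sqrt ht₀, Real.sq_sqrt (by linarith)]
    ring
  · rw [Real.sq_sqrt ht₀, htn]
    ring

theorem entanglement_advantage_gap (n : ℕ) (hn : 2 ≤ n) :
    -- strict gap on the open interval (0, 1 − 2^{−n})
    (∀ ω : ℝ, 0 < ω → ω < 1 - 1 / (2 : ℝ) ^ n → pSep ω n < pEnt ω n) ∧
    -- coincidence at the endpoints
    pSep 0 n = 1 / (2 : ℝ) ^ n ∧ pEnt 0 n = 1 / (2 : ℝ) ^ n ∧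
    pSep (1 - 1 / (2 : ℝ) ^ n) n = 1 ∧ pEnt (1 - 1 / (2 : ℝ) ^ n) n = 1 := by
  have hn₀ : n ≠ 0 := by omega
  refine ⟨fun ω hω₀ hω ↦ ?_, pSep_zero hn₀, by simp [pEnt],
    pSep_one_sub_inv_two_pow hn₀, pEnt_one_sub_inv_two_pow n⟩
  obtain ⟨a, b, hb, hba, h_norm, rfl⟩ :=
    exists_sq_add_sq_eq_one_of_lt_one_sub_inv_two_pow hn₀ hω₀ hω
  exact pSep_lt_pEnt_one_sub_pow (hb.trans hba) hb hba.ne' h_norm hn
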